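/- The pair (F̄^{Euler}, F̄^e) is REPC: under Assumptions 1–3 and conditions (i) |f(0,U(0,e,T))| ≤ φ(|e|) for some φ ∈ K∞ (for |e| ≤ E, T small), and (ii) |f(x,U(x,e,T)) − f(y,U(y,e,T))| ≤ K|x−y| (semiglobally), the closed-loop Euler model F̄^{Euler}(x,e,T) := x + T f(x,U(x,e,T)) and the closed-loop exact model F̄^e(x,e,T) := F^e(x,U(x,e,T),T) satisfy: for each M, E ≥ 0 there exist K̂, T° > 0 and ρ ∈ K∞ with |F̄^e(x^e,e,T) − F̄^{Euler}(x^a,e,T)| ≤ (1+K̂T)|x^e − x^a| + Tρ(T)(|x^e| + φ(|e|)) for all |x^e|,|x^a| ≤ M, |e| ≤ E, T ∈ (0,T°). -/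

import Mathlib

open scoped BigOperators NNReal

noncomputable section

/-- Class `K∞` function: continuous, strictly increasing and unbounded on `[0,∞)`, vanishing at 0. -/
def IsKInf (φ : ℝ → ℝ) : Prop :=
  ContinuousOn φ (Set.Ici 0) ∧ StrictMonoOn φ (Set.Ici 0) ∧ φ 0 = 0 ∧
    ∀ c : ℝ, ∃ x : ℝ, 0 ≤ x ∧ c < φ x

/-- Discrete-time trajectory of the closed-loop model `x_{k+1} = F (x_k) (e_k) (T_k)`. -/
def traj {E D : Type*} (F : E → D → ℝ → E) (ξ : E) (es : ℕ → D) (Ts : ℕ → ℝ) : ℕ → E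
  | 0 => ξ
  | k + 1 => F (traj F ξ es Ts k) (es k) (Ts k)

/-- `sup_{0 ≤ i ≤ k-1} ‖e_i‖` with the convention that it is `0` for `k = 0`. -/
def supN {D : Type*} [NormedAddCommGroup D] (es : ℕ → D) (k : ℕ) : ℝ :=
  (((Finset.range k).sup fun i => ‖es i‖₊ : ℝ≥0) : ℝ)

/-- Robust Equilibrium-Preserving Consistency (REPC) of the model `Fa` with the model `Fb`. -/
def REPC {E D : Type*} [NormedAddCommGroup E] [NormedAddCommGroup D]
    (Fa Fb : E → D → ℝ → E) : Prop :=
  ∃ φ : ℝ → ℝ, IsKInf φ ∧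
    ∀ M Eb : ℝ, 0 ≤ M → 0 ≤ Eb →
      ∃ K : ℝ, 0 < K ∧ ∃ Tstar : ℝ, 0 < Tstar ∧ ∃ ρ : ℝ → ℝ, IsKInf ρ ∧
        ∀ (xa xb : E) (e : D) (T : ℝ), ‖xa‖ ≤ M → ‖xb‖ ≤ M → ‖e‖ ≤ Eb →
          0 < T → T < Tstar →
          ‖Fa xa e T - Fb xb e T‖ ≤
            (1 + K * T) * ‖xa - xb‖ + T * ρ T * (max ‖xa‖ ‖xb‖ + φ ‖e‖)

/-- The `k`-fold iterate `α^k(0,{T_i})`. -/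
def alphaIter (α : ENNReal → ℝ → ENNReal) (Ts : ℕ → ℝ) : ℕ → ENNReal
  | 0 => 0
  | k + 1 => α (alphaIter α Ts k) (Ts k)

/-- Robust Equilibrium-Preserving Multistep Consistency (REPMC) of `Fa` with `Fb`,
with a fixed class-`K∞` function `φ`. -/
def REPMCWith {E D : Type*} [NormedAddCommGroup E] [NormedAddCommGroup D]
    (Fa Fb : E → D → ℝ → E) (φ : ℝ → ℝ) : Prop :=
  ∀ M Eb 𝒯 η : ℝ, 0 ≤ M → 0 ≤ Eb → 0 < 𝒯 → 0 < η →
    ∃ Tstar : ℝ, 0 < Tstar ∧ ∃ α : ENNReal → ℝ → ENNReal,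
      (∀ T : ℝ, 0 ≤ T → T < Tstar → Monotone (fun δ => α δ T)) ∧
      (∀ (xa xb : E) (e : D) (T δ : ℝ), ‖xa‖ ≤ M → ‖xb‖ ≤ M → ‖e‖ ≤ Eb →
        0 < T → T < Tstar → ‖xa - xb‖ ≤ δ →
        ENNReal.ofReal ‖Fa xa e T - Fb xb e T‖ ≤ α (ENNReal.ofReal δ) T) ∧
      (∀ Ts : ℕ → ℝ, (∀ i, 0 < Ts i ∧ Ts i < Tstar) →
        ∀ k : ℕ, (∑ i ∈ Finset.range k, Ts i) ≤ 𝒯 →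
          alphaIter α Ts k ≤ ENNReal.ofReal (η * M + φ Eb))

/-- REPMC: existence of a suitable `φ ∈ K∞`. -/
def REPMC {E D : Type*} [NormedAddCommGroup E] [NormedAddCommGroup D]
    (Fa Fb : E → D → ℝ → E) : Prop :=
  ∃ φ : ℝ → ℝ, IsKInf φ ∧ REPMCWith Fa Fb φ

/-- Semiglobal exponential ISS under varying sampling rate, with constants `K ≥ 1`, `λ > 0`
and gain `γ ∈ K∞`. -/
def SEISSVSR {E D : Type*} [NormedAddCommGroup E] [NormedAddCommGroup D]
    (F : E → D → ℝ → E) (K lam : ℝ) (γ : ℝ → ℝ) : Prop :=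
  ∀ M Eb : ℝ, 0 ≤ M → 0 ≤ Eb → ∃ Tstar : ℝ, 0 < Tstar ∧
    ∀ (ξ : E) (es : ℕ → D) (Ts : ℕ → ℝ),
      ‖ξ‖ ≤ M → (∀ i, ‖es i‖ ≤ Eb) → (∀ i, 0 < Ts i ∧ Ts i < Tstar) →
      ∀ k : ℕ, ‖traj F ξ es Ts k‖ ≤
        K * ‖ξ‖ * Real.exp (-lam * ∑ i ∈ Finset.range k, Ts i) + γ (supN es k)

/-- Class `KL` function. -/
def IsKL (β : ℝ → ℝ → ℝ) : Prop :=
  (∀ t : ℝ, 0 ≤ t → ContinuousOn (fun s => β s t) (Set.Ici 0) ∧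
    StrictMonoOn (fun s => β s t) (Set.Ici 0) ∧ β 0 t = 0) ∧
  (∀ s : ℝ, 0 ≤ s → StrictAntiOn (fun t => β s t) (Set.Ici 0) ∧
    Filter.Tendsto (fun t => β s t) Filter.atTop (nhds 0))

/-!
With the input frozen at `u = U(xᵉ, e, T)`, Grönwall's inequality bounds the drift of the exact
solution by `|F^e(xᵉ, u, t) - xᵉ| ≤ t e^{Lt} |f(xᵉ, u)|`, so the one-step Euler error is
`O(T² |f(xᵉ, u)|)`; an exit-time argument keeps the solution in a unit ball, where `f` is
Lipschitz and bounded, as long as `T < 1 / C_f`. Conditions (i) and (ii) give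
`|f(xᵉ, u)| ≤ K |xᵉ| + φ(|e|)`, and (ii) alone bounds the difference of the Euler steps from `xᵉ`
and `xᵃ` by `(1 + K T) |xᵉ - xᵃ|`.
-/

open Set Metric Real intervalIntegral MeasureTheory Topology Interval

theorem IsKInf.nonneg {φ : ℝ → ℝ} (hφ : IsKInf φ) {s : ℝ} (hs : 0 ≤ s) : 0 ≤ φ s :=
  hφ.2.2.1 ▸ hφ.2.1.monotoneOn self_mem_Ici hs hs

theorem isKInf_const_mul {c : ℝ} (hc : 0 < c) : IsKInf (c * ·) := by
  refine ⟨(continuous_const_mul c).continuousOn, fun x _ y _ hxy => mul_lt_mul_of_pos_left hxy hc,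
    mul_zero c, fun b => ⟨|b| / c + 1, by positivity, ?_⟩⟩
  show b < c * (|b| / c + 1)
  rw [mul_add, mul_div_cancel₀ _ hc.ne', mul_one]
  linarith [le_abs_self b]

theorem exp_sub_one_le_mul_exp (y : ℝ) : exp y - 1 ≤ y * exp y := by
  have h := mul_le_mul_of_nonneg_right (add_one_le_exp (-y)) (exp_pos y).le
  rw [← exp_add, neg_add_cancel, exp_zero] at h
  linarith

theorem gronwallBound_zero_le {K ε x : ℝ} (hK : 0 ≤ K) (hε : 0 ≤ ε) :
    gronwallBound 0 K ε x ≤ ε * x * exp (K * x) := by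
  rcases hK.eq_or_lt with rfl | hK
  · simp [gronwallBound_K0]
  rw [gronwallBound_of_K_ne_0 hK.ne']
  dsimp only
  rw [zero_mul, zero_add, div_mul_eq_mul_div, div_le_iff₀ hK]
  nlinarith [mul_le_mul_of_nonneg_left (exp_sub_one_le_mul_exp (K * x)) hε]

theorem norm_sub_euler_step_le {E : Type*} [SeminormedAddCommGroup E] [NormedSpace ℝ E]
    {y xe xa ve va : E} {T K c : ℝ} (hT : 0 ≤ T) (hv : ‖ve - va‖ ≤ K * ‖xe - xa‖)
    (hy : ‖y - xe - T • ve‖ ≤ c) :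
    ‖y - (xa + T • va)‖ ≤ (1 + K * T) * ‖xe - xa‖ + c := by
  have hsplit : y - (xa + T • va) = (y - xe - T • ve) + (xe - xa) + T • (ve - va) := by
    rw [smul_sub]; abel
  calc ‖y - (xa + T • va)‖ ≤ ‖y - xe - T • ve‖ + ‖xe - xa‖ + ‖T • (ve - va)‖ := by
        rw [hsplit]; exact norm_add₃_le
    _ ≤ c + ‖xe - xa‖ + T * (K * ‖xe - xa‖) := by
        rw [norm_smul, Real.norm_of_nonneg hT]; gcongr
    _ = (1 + K * T) * ‖xe - xa‖ + c := by ring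

section IntegralEquation

variable {E : Type*} [NormedAddCommGroup E] [NormedSpace ℝ E] {v : E → E} {F : ℝ → E} {ξ : E}
  {T : ℝ}

theorem mem_closedBall_of_eq_add_integral {C r : ℝ} (hFc : ContinuousOn F (Icc 0 T))
    (hF : ∀ t ∈ Icc 0 T, F t = ξ + ∫ τ in (0 : ℝ)..t, v (F τ))
    (hv : ∀ x ∈ closedBall ξ r, ‖v x‖ ≤ C) (hC : 0 ≤ C) (hCT : C * T < r) :
    ∀ t ∈ Icc 0 T, F t ∈ closedBall ξ r := by
  by_contra! hleave
  obtain ⟨t₀, ht₀, hout⟩ := hleave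
  -- `t₁` is the first exit time; before it `v ∘ F` is bounded by `C`, so `F` moves at most `C t₁`
  set B := Icc 0 T ∩ {t | r ≤ ‖F t - ξ‖}
  have hB : IsClosed B :=
    (hFc.sub continuousOn_const).norm.preimage_isClosed_of_isClosed isClosed_Icc isClosed_Ici
  have hBbdd : BddBelow B := ⟨0, fun t ht => ht.1.1⟩
  set t₁ := sInf B
  have ht₁ : t₁ ∈ B :=
    hB.csInf_mem ⟨t₀, ht₀, (not_le.mp (mem_closedBall_iff_norm.not.mp hout)).le⟩ hBbdd
  have hbefore : ∀ s ∈ Ico 0 t₁, ‖v (F s)‖ ≤ C := fun s hs =>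
    hv _ <| mem_closedBall_iff_norm.2 <| le_of_not_ge fun h =>
      notMem_of_lt_csInf hs.2 hBbdd ⟨⟨hs.1, hs.2.le.trans ht₁.1.2⟩, h⟩
  have hmove : ‖F t₁ - ξ‖ ≤ C * t₁ := by
    rw [hF t₁ ht₁.1, add_sub_cancel_left]
    have := norm_integral_le_of_norm_le_const_ae (a := 0) (b := t₁) (C := C)
      (f := fun τ => v (F τ)) <| by
        filter_upwards [volume.ae_ne t₁] with s hne hs
        rw [uIoc_of_le ht₁.1.1] at hs
        exact hbefore s ⟨hs.1.le, lt_of_le_of_ne hs.2 hne⟩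
    rwa [sub_zero, abs_of_nonneg ht₁.1.1] at this
  have hr : r ≤ ‖F t₁ - ξ‖ := ht₁.2
  nlinarith [mul_le_mul_of_nonneg_left ht₁.1.2 hC]

theorem hasDerivWithinAt_of_eq_add_integral [CompleteSpace E] {G g : ℝ → E} {c : E} {a t : ℝ}
    (hg : ContinuousOn g (Icc a T)) (hG : ∀ s ∈ Icc a T, G s = c + ∫ τ in a..s, g τ)
    (ht : t ∈ Ico a T) : HasDerivWithinAt G (g t) (Ici t) t := by
  have hnhds : Icc t T ∈ 𝓝[>] t := Icc_mem_nhdsGT_of_mem ⟨le_rfl, ht.2⟩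
  have hgt : ContinuousOn g (Icc t T) := hg.mono (Icc_subset_Icc_left ht.1)
  have hint : HasDerivWithinAt (fun u => ∫ τ in a..u, g τ) (g t) (Ici t) t :=
    integral_hasDerivWithinAt_right
      ((hg.mono (Icc_subset_Icc_right ht.2.le)).intervalIntegrable_of_Icc ht.1)
      ((hgt.stronglyMeasurableAtFilter_nhdsWithin measurableSet_Icc t).filter_mono
        (nhdsWithin_le_of_mem hnhds))
      ((hgt t ⟨le_rfl, ht.2.le⟩).mono_of_mem_nhdsWithin hnhds)
  refine (hint.const_add c).congr_of_eventuallyEq ?_ (hG t (Ico_subset_Icc_self ht))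
  filter_upwards [Icc_mem_nhdsGE ht.2] with s hs using hG s ⟨ht.1.trans hs.1, hs.2⟩

variable {L : ℝ≥0} {r : ℝ} (hFc : ContinuousOn F (Icc 0 T))
  (hF : ∀ t ∈ Icc 0 T, F t = ξ + ∫ τ in (0 : ℝ)..t, v (F τ))
  (hv : LipschitzOnWith L v (closedBall ξ r)) (hmem : ∀ t ∈ Icc 0 T, F t ∈ closedBall ξ r)
include hFc hF hv hmem

theorem norm_sub_le_of_eq_add_integral [CompleteSpace E] :
    ∀ t ∈ Icc 0 T, ‖F t - ξ‖ ≤ ‖v ξ‖ * t * exp (L * t) := by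
  have hvF : ContinuousOn (fun τ => v (F τ)) (Icc 0 T) := hv.continuousOn.comp hFc hmem
  have hbound : ∀ t ∈ Ico 0 T, ‖v (F t)‖ ≤ L * ‖F t - ξ‖ + ‖v ξ‖ := fun t ht => by
    have hξ : ξ ∈ closedBall ξ r := by
      simpa [hF 0 ⟨le_rfl, ht.1.trans ht.2.le⟩] using hmem 0 ⟨le_rfl, ht.1.trans ht.2.le⟩
    linarith [norm_sub_norm_le (v (F t)) (v ξ),
      hv.norm_sub_le (hmem t (Ico_subset_Icc_self ht)) hξ]
  intro t ht
  calc ‖F t - ξ‖ ≤ gronwallBound 0 L ‖v ξ‖ (t - 0) :=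
        norm_le_gronwallBound_of_norm_deriv_right_le (hFc.sub continuousOn_const)
          (fun s hs => (hasDerivWithinAt_of_eq_add_integral hvF hF hs).sub_const ξ)
          (by simp [hF 0 ⟨le_rfl, ht.1.trans ht.2⟩]) hbound t ht
    _ ≤ ‖v ξ‖ * t * exp (L * t) := by
        rw [sub_zero]; exact gronwallBound_zero_le L.coe_nonneg (norm_nonneg _)

theorem norm_sub_sub_smul_le_of_eq_add_integral [CompleteSpace E] (hT : 0 ≤ T) :
    ‖F T - ξ - T • v ξ‖ ≤ L * exp (L * T) * ‖v ξ‖ * T ^ 2 := by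
  have hvF : ContinuousOn (fun τ => v (F τ)) (Icc 0 T) := hv.continuousOn.comp hFc hmem
  have hξ : ξ ∈ closedBall ξ r := by simpa [hF 0 ⟨le_rfl, hT⟩] using hmem 0 ⟨le_rfl, hT⟩
  have hsplit : F T - ξ - T • v ξ = ∫ τ in (0 : ℝ)..T, (v (F τ) - v ξ) := by
    rw [integral_sub (hvF.intervalIntegrable_of_Icc hT) intervalIntegrable_const,
      intervalIntegral.integral_const, hF T ⟨hT, le_rfl⟩, sub_zero, add_sub_cancel_left]
  have hclose : ∀ τ ∈ Ι 0 T, ‖v (F τ) - v ξ‖ ≤ L * (‖v ξ‖ * T * exp (L * T)) := by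
    intro τ hτ
    rw [uIoc_of_le hT] at hτ
    have hτ' : τ ∈ Icc 0 T := Ioc_subset_Icc_self hτ
    calc ‖v (F τ) - v ξ‖ ≤ L * ‖F τ - ξ‖ := hv.norm_sub_le (hmem τ hτ') hξ
      _ ≤ L * (‖v ξ‖ * τ * exp (L * τ)) := by
          gcongr; exact norm_sub_le_of_eq_add_integral hFc hF hv hmem τ hτ'
      _ ≤ L * (‖v ξ‖ * T * exp (L * T)) := by gcongr <;> exact hτ.2
  calc ‖F T - ξ - T • v ξ‖ ≤ L * (‖v ξ‖ * T * exp (L * T)) * |T - 0| := by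
        rw [hsplit]; exact norm_integral_le_of_norm_le_const hclose
    _ = L * exp (L * T) * ‖v ξ‖ * T ^ 2 := by rw [sub_zero, abs_of_nonneg hT]; ring

end IntegralEquation

theorem exists_norm_flow_sub_euler_le {X V : Type*} [NormedAddCommGroup X] [NormedSpace ℝ X]
    [CompleteSpace X] [ProperSpace X] [NormedAddCommGroup V] [ProperSpace V]
    (f : X → V → X) (Fe : X → V → ℝ → X)
    (hLip : ∀ (Xc : Set X) (Uc : Set V), IsCompact Xc → IsCompact Uc → ∃ L : ℝ, 0 < L ∧
      ∀ x ∈ Xc, ∀ y ∈ Xc, ∀ u ∈ Uc, ‖f x u - f y u‖ ≤ L * ‖x - y‖)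
    (hBnd : ∀ M Cu : ℝ, 0 ≤ M → 0 ≤ Cu → ∃ Cf : ℝ, 0 < Cf ∧
      ∀ x u, ‖x‖ ≤ M → ‖u‖ ≤ Cu → ‖f x u‖ ≤ Cf)
    (hflow : ∀ ξ u, ContinuousOn (fun t => Fe ξ u t) (Ici 0) ∧
      ∀ t : ℝ, 0 ≤ t → Fe ξ u t = ξ + ∫ τ in (0 : ℝ)..t, f (Fe ξ u τ) u)
    {M Cu : ℝ} (hM : 0 ≤ M) (hCu : 0 ≤ Cu) :
    ∃ T₀ > 0, ∃ C > 0, ∀ ξ u T, ‖ξ‖ ≤ M → ‖u‖ ≤ Cu → 0 ≤ T → T < T₀ →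
      ‖Fe ξ u T - ξ - T • f ξ u‖ ≤ C * ‖f ξ u‖ * T ^ 2 := by
  obtain ⟨Cf, hCf, hfCf⟩ := hBnd (M + 1) Cu (by linarith) hCu
  obtain ⟨L, hL, hfL⟩ := hLip (closedBall 0 (M + 1)) (closedBall 0 Cu)
    (isCompact_closedBall _ _) (isCompact_closedBall _ _)
  lift L to ℝ≥0 using hL.le
  refine ⟨min 1 Cf⁻¹, by positivity, L * exp L, by positivity, fun ξ u T hξ hu hT hTlt => ?_⟩
  rw [lt_min_iff] at hTlt
  have hball : closedBall ξ 1 ⊆ closedBall 0 (M + 1) :=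
    closedBall_subset_closedBall' (by rw [dist_zero_right]; linarith)
  have hu' : u ∈ closedBall 0 Cu := mem_closedBall_zero_iff.2 hu
  have hLipu : LipschitzOnWith L (f · u) (closedBall ξ 1) :=
    LipschitzOnWith.of_dist_le_mul fun x hx y hy => by
      simpa only [dist_eq_norm] using hfL x (hball hx) y (hball hy) u hu'
  obtain ⟨hFc, hF⟩ := hflow ξ u
  have hFc' : ContinuousOn (Fe ξ u) (Icc 0 T) := hFc.mono Icc_subset_Ici_self
  have hF' : ∀ t ∈ Icc 0 T, Fe ξ u t = ξ + ∫ τ in (0 : ℝ)..t, f (Fe ξ u τ) u :=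
    fun t ht => hF t ht.1
  have hmem := mem_closedBall_of_eq_add_integral hFc' hF'
    (fun x hx => hfCf x u (mem_closedBall_zero_iff.1 (hball hx)) hu) hCf.le
    (by rw [← lt_div_iff₀' hCf, one_div]; exact hTlt.2)
  calc ‖Fe ξ u T - ξ - T • f ξ u‖ ≤ L * exp (L * T) * ‖f ξ u‖ * T ^ 2 :=
        norm_sub_sub_smul_le_of_eq_add_integral hFc' hF' hLipu hmem hT
    _ ≤ L * exp L * ‖f ξ u‖ * T ^ 2 := by
        gcongr; exact mul_le_of_le_one_right L.coe_nonneg hTlt.1.le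

theorem stmt12 {n m q : ℕ}
    (f : EuclideanSpace ℝ (Fin n) → EuclideanSpace ℝ (Fin m) → EuclideanSpace ℝ (Fin n))
    (U : EuclideanSpace ℝ (Fin n) → EuclideanSpace ℝ (Fin q) → ℝ → EuclideanSpace ℝ (Fin m))
    (Fe : EuclideanSpace ℝ (Fin n) → EuclideanSpace ℝ (Fin m) → ℝ → EuclideanSpace ℝ (Fin n))
    -- Assumption 1: f locally Lipschitz in x uniformly in u
    (hLip : ∀ (X : Set (EuclideanSpace ℝ (Fin n))) (Uc : Set (EuclideanSpace ℝ (Fin m))),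
      IsCompact X → IsCompact Uc → ∃ L : ℝ, 0 < L ∧
        ∀ x ∈ X, ∀ y ∈ X, ∀ u ∈ Uc, ‖f x u - f y u‖ ≤ L * ‖x - y‖)
    -- Assumption 2: f locally bounded
    (hBnd : ∀ M Cu : ℝ, 0 ≤ M → 0 ≤ Cu → ∃ Cf : ℝ, 0 < Cf ∧
      ∀ (x : EuclideanSpace ℝ (Fin n)) (u : EuclideanSpace ℝ (Fin m)),
        ‖x‖ ≤ M → ‖u‖ ≤ Cu → ‖f x u‖ ≤ Cf)
    -- Assumption 3: U small-time locally uniformly bounded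
    (hUb : ∀ M Eb : ℝ, 0 ≤ M → 0 ≤ Eb → ∃ Tu : ℝ, 0 < Tu ∧ ∃ Cu : ℝ, 0 < Cu ∧
      ∀ (x : EuclideanSpace ℝ (Fin n)) (e : EuclideanSpace ℝ (Fin q)) (T : ℝ),
        ‖x‖ ≤ M → ‖e‖ ≤ Eb → 0 < T → T < Tu → ‖U x e T‖ ≤ Cu)
    -- Fe is the exact flow of ẋ = f(x,u) with constant input
    (hflow : ∀ (ξ : EuclideanSpace ℝ (Fin n)) (u : EuclideanSpace ℝ (Fin m)),
      ContinuousOn (fun t => Fe ξ u t) (Set.Ici 0) ∧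
      ∀ t : ℝ, 0 ≤ t → Fe ξ u t = ξ + ∫ τ in (0 : ℝ)..t, f (Fe ξ u τ) u)
    (φ : ℝ → ℝ) (hφ : IsKInf φ)
    -- condition (i)
    (hcond1 : ∀ Eb : ℝ, 0 ≤ Eb → ∃ Ti : ℝ, 0 < Ti ∧
      ∀ (e : EuclideanSpace ℝ (Fin q)) (T : ℝ), ‖e‖ ≤ Eb → 0 < T → T < Ti →
        ‖f 0 (U 0 e T)‖ ≤ φ ‖e‖)
    -- condition (ii)
    (hcond2 : ∀ M Eb : ℝ, 0 ≤ M → 0 ≤ Eb → ∃ K : ℝ, 0 < K ∧ ∃ Tii : ℝ, 0 < Tii ∧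
      ∀ (xa xb : EuclideanSpace ℝ (Fin n)) (e : EuclideanSpace ℝ (Fin q)) (T : ℝ),
        ‖xa‖ ≤ M → ‖xb‖ ≤ M → ‖e‖ ≤ Eb → 0 < T → T < Tii →
        ‖f xa (U xa e T) - f xb (U xb e T)‖ ≤ K * ‖xa - xb‖) :
    ∀ M Eb : ℝ, 0 ≤ M → 0 ≤ Eb →
      ∃ Khat : ℝ, 0 < Khat ∧ ∃ To : ℝ, 0 < To ∧ ∃ ρ : ℝ → ℝ, IsKInf ρ ∧
        ∀ (xe xa : EuclideanSpace ℝ (Fin n)) (e : EuclideanSpace ℝ (Fin q)) (T : ℝ),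
          ‖xe‖ ≤ M → ‖xa‖ ≤ M → ‖e‖ ≤ Eb → 0 < T → T < To →
          ‖Fe xe (U xe e T) T - (xa + T • f xa (U xa e T))‖ ≤
            (1 + Khat * T) * ‖xe - xa‖ + T * ρ T * (‖xe‖ + φ ‖e‖) := by
  intro M Eb hM hEb
  obtain ⟨Tu, hTu, Cu, hCu, hUbd⟩ := hUb M Eb hM hEb
  obtain ⟨T₀, hT₀, C, hC, heuler⟩ := exists_norm_flow_sub_euler_le f Fe hLip hBnd hflow hM hCu.le
  obtain ⟨Ti, hTi, hf0⟩ := hcond1 Eb hEb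
  obtain ⟨K, hK, Tii, hTii, hfK⟩ := hcond2 M Eb hM hEb
  refine ⟨K, hK, min (min Tu T₀) (min Ti Tii), by positivity, (C * (K + 1) * ·),
    isKInf_const_mul (by positivity), fun xe xa e T hxe hxa he hT hTlt => ?_⟩
  simp only [lt_min_iff] at hTlt
  have hfxe : ‖f xe (U xe e T)‖ ≤ K * ‖xe‖ + φ ‖e‖ := by
    have hK0 := hfK xe 0 e T hxe (by rwa [norm_zero]) he hT hTlt.2.2
    rw [sub_zero] at hK0
    linarith [norm_le_insert' (f xe (U xe e T)) (f 0 (U 0 e T)), hf0 e T he hT hTlt.2.1]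
  refine norm_sub_euler_step_le hT.le (hfK xe xa e T hxe hxa he hT hTlt.2.2) ?_
  calc ‖Fe xe (U xe e T) T - xe - T • f xe (U xe e T)‖
      ≤ C * ‖f xe (U xe e T)‖ * T ^ 2 :=
        heuler xe _ T hxe (hUbd xe e T hxe he hT hTlt.1.1) hT.le hTlt.1.2
    _ ≤ C * ((K + 1) * (‖xe‖ + φ ‖e‖)) * T ^ 2 := by
        gcongr
        nlinarith [hφ.nonneg (norm_nonneg e), norm_nonneg xe]
    _ = T * (C * (K + 1) * T) * (‖xe‖ + φ ‖e‖) := by ring
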